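/- arXiv:2405.15077 — 5 statements merged into one kernel-verified Lean document; each statement's English description precedes it below -/
import Mathlib

section
/- (GPPM penalizes no-effort.) Let X_i, X_j be finitely-valued random variables and suppose the estimator q(·|x) satisfies D_KL(P[X_j|X_i=x] ∥ q(·|x)) ≤ ε for all x. Then the expected score of reporting X_i truthfully, E[log q(X_j | X_i)], exceeds the expected score of reporting any fixed (signal-independent) report σ drawn independently of (X_i, X_j), E[log q(X_j | σ)], by at least I(X_i; X_j) − ε. -/
open Finset

/-- Gibbs' inequality. -/
lemma gibbs_ineq {B : Type*} [Fintype B] (p q : B → ℝ)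
    (hp : ∀ b, 0 ≤ p b) (hq : ∀ b, 0 < q b)
    (hps : ∑ b, p b = 1) (hqs : ∑ b, q b = 1) :
    ∑ b, p b * Real.log (q b) ≤ ∑ b, p b * Real.log (p b) := by
  have key : ∀ b, p b * Real.log (q b) - p b * Real.log (p b) ≤ q b - p b := by
    intro b
    rcases (hp b).lt_or_eq with h | h
    · have hq' := hq b
      have hle : Real.log (q b / p b) ≤ q b / p b - 1 :=
        Real.log_le_sub_one_of_pos (div_pos hq' h)
      have hlog : Real.log (q b / p b) = Real.log (q b) - Real.log (p b) :=
        Real.log_div hq'.ne' h.ne'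
      have h2 := mul_le_mul_of_nonneg_left hle h.le
      rw [hlog] at h2
      have h3 : p b * (q b / p b - 1) = q b - p b := by field_simp
      nlinarith
    · simp [← h, (hq b).le]
  have hsum : ∑ b, (p b * Real.log (q b) - p b * Real.log (p b)) ≤ ∑ b, (q b - p b) :=
    Finset.sum_le_sum (fun b _ => key b)
  rw [Finset.sum_sub_distrib, Finset.sum_sub_distrib, hps, hqs] at hsum
  linarith

/-- GPPM penalizes no-effort: if the estimator `q(·|x)` is within KL-divergence
`ε` of the true conditional `P[X_j | X_i = x]` for every `x`, then the expected
truthful score `E[log q(X_j | X_i)]` exceeds the expected score of any fixed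
signal-independent random report (with distribution `ρ`, independent of
`(X_i, X_j)`) by at least `I(X_i; X_j) − ε`. -/
theorem gppm_penalizes_no_effort
    {A B : Type*} [Fintype A] [Fintype B]
    (P : A → B → ℝ) (hP0 : ∀ a b, 0 ≤ P a b) (hP1 : ∑ a, ∑ b, P a b = 1)
    (q : A → B → ℝ) (hqpos : ∀ a b, 0 < q a b) (hq1 : ∀ a, ∑ b, q a b = 1)
    (ρ : A → ℝ) (hρ0 : ∀ a, 0 ≤ ρ a) (hρ1 : ∑ a, ρ a = 1)
    (ε : ℝ) (hε : 0 ≤ ε)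
    (hKL : ∀ a, 0 < ∑ b', P a b' →
      ∑ b, (P a b / ∑ b', P a b') *
        Real.log ((P a b / ∑ b', P a b') / q a b) ≤ ε) :
    (∑ a, ∑ b, P a b * Real.log (q a b))
        - (∑ s, ρ s * ∑ b, (∑ a, P a b) * Real.log (q s b))
      ≥ (∑ a, ∑ b, P a b *
          Real.log (P a b / ((∑ b', P a b') * (∑ a', P a' b)))) - ε := by
  have hpA0 : ∀ a, 0 ≤ ∑ b, P a b := fun a => Finset.sum_nonneg (fun b _ => hP0 a b)
  have hpB0 : ∀ b, 0 ≤ ∑ a, P a b := fun b => Finset.sum_nonneg (fun a _ => hP0 a b)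
  have hpBsum : ∑ b, ∑ a, P a b = 1 := by rw [Finset.sum_comm]; exact hP1
  -- Step A: truthful score bound per a
  have stepA : ∀ a, ∑ b, P a b * Real.log (P a b / ∑ b', P a b') - (∑ b', P a b') * ε
      ≤ ∑ b, P a b * Real.log (q a b) := by
    intro a
    rcases (hpA0 a).lt_or_eq with h | h
    · have hS := h
      have hk := hKL a hS
      have hmul : ∑ b, P a b * Real.log ((P a b / ∑ b', P a b') / q a b)
          ≤ (∑ b', P a b') * ε := by
        have h2 := mul_le_mul_of_nonneg_left hk hS.le
        calc ∑ b, P a b * Real.log ((P a b / ∑ b', P a b') / q a b)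
            = (∑ b', P a b') * ∑ b, (P a b / ∑ b', P a b') *
                Real.log ((P a b / ∑ b', P a b') / q a b) := by
              rw [Finset.mul_sum]
              refine Finset.sum_congr rfl fun b _ => ?_
              field_simp
          _ ≤ (∑ b', P a b') * ε := h2
      have hsplit : ∑ b, P a b * Real.log ((P a b / ∑ b', P a b') / q a b)
          = ∑ b, P a b * Real.log (P a b / ∑ b', P a b')
            - ∑ b, P a b * Real.log (q a b) := by
        rw [← Finset.sum_sub_distrib]
        refine Finset.sum_congr rfl fun b _ => ?_
        rcases (hP0 a b).lt_or_eq with hb | hb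
        · rw [Real.log_div (div_ne_zero hb.ne' hS.ne') (hqpos a b).ne']; ring
        · simp [← hb]
      linarith [hsplit ▸ hmul]
    · have hz : ∀ b, P a b = 0 := by
        intro b
        have := (Finset.sum_eq_zero_iff_of_nonneg (fun b _ => hP0 a b)).mp h.symm
        exact this b (Finset.mem_univ b)
      simp [hz, ← h]
  -- sum Step A over a
  have hT : ∑ a, ∑ b, P a b * Real.log (P a b / ∑ b', P a b') - ε
      ≤ ∑ a, ∑ b, P a b * Real.log (q a b) := by
    have := Finset.sum_le_sum (fun a (_ : a ∈ Finset.univ) => stepA a)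
    rw [Finset.sum_sub_distrib, ← Finset.sum_mul, hP1, one_mul] at this
    exact this
  -- Step B: no-effort score bound
  have stepB : ∀ s, ∑ b, (∑ a, P a b) * Real.log (q s b)
      ≤ ∑ b, (∑ a, P a b) * Real.log (∑ a, P a b) :=
    fun s => gibbs_ineq _ _ hpB0 (hqpos s) hpBsum (hq1 s)
  have hN : ∑ s, ρ s * ∑ b, (∑ a, P a b) * Real.log (q s b)
      ≤ ∑ b, (∑ a, P a b) * Real.log (∑ a, P a b) := by
    calc ∑ s, ρ s * ∑ b, (∑ a, P a b) * Real.log (q s b)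
        ≤ ∑ s, ρ s * ∑ b, (∑ a, P a b) * Real.log (∑ a, P a b) :=
          Finset.sum_le_sum (fun s _ => mul_le_mul_of_nonneg_left (stepB s) (hρ0 s))
      _ = ∑ b, (∑ a, P a b) * Real.log (∑ a, P a b) := by
          rw [← Finset.sum_mul, hρ1, one_mul]
  -- Step C: mutual information identity
  have hMI : ∑ a, ∑ b, P a b * Real.log (P a b / ((∑ b', P a b') * (∑ a', P a' b)))
      = ∑ a, ∑ b, P a b * Real.log (P a b / ∑ b', P a b')
        - ∑ b, (∑ a, P a b) * Real.log (∑ a, P a b) := by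
    have key : ∀ a b, P a b * Real.log (P a b / ((∑ b', P a b') * (∑ a', P a' b)))
        = P a b * Real.log (P a b / ∑ b', P a b') - P a b * Real.log (∑ a', P a' b) := by
      intro a b
      rcases (hP0 a b).lt_or_eq with hb | hb
      · have hSa : 0 < ∑ b', P a b' :=
          lt_of_lt_of_le hb (Finset.single_le_sum (fun b' _ => hP0 a b') (Finset.mem_univ b))
        have hSb : 0 < ∑ a', P a' b :=
          lt_of_lt_of_le hb (Finset.single_le_sum (fun a' _ => hP0 a' b) (Finset.mem_univ a))
        rw [← div_div, Real.log_div (div_ne_zero hb.ne' hSa.ne') hSb.ne']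
        ring
      · simp [← hb]
    calc ∑ a, ∑ b, P a b * Real.log (P a b / ((∑ b', P a b') * (∑ a', P a' b)))
        = ∑ a, ∑ b, (P a b * Real.log (P a b / ∑ b', P a b')
            - P a b * Real.log (∑ a', P a' b)) := by
          exact Finset.sum_congr rfl fun a _ => Finset.sum_congr rfl fun b _ => key a b
      _ = ∑ a, ∑ b, P a b * Real.log (P a b / ∑ b', P a b')
            - ∑ a, ∑ b, P a b * Real.log (∑ a', P a' b) := by
          rw [← Finset.sum_sub_distrib]
          exact Finset.sum_congr rfl fun a _ => Finset.sum_sub_distrib _ _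
      _ = ∑ a, ∑ b, P a b * Real.log (P a b / ∑ b', P a b')
            - ∑ b, (∑ a, P a b) * Real.log (∑ a, P a b) := by
          congr 1
          rw [Finset.sum_comm]
          exact Finset.sum_congr rfl fun b _ => (Finset.sum_mul ..).symm
  rw [ge_iff_le, hMI]
  linarith
end

section
/- (GPPM penalizes low-effort.) Let X_i, X_j be finitely-valued random variables, X_i^l = f(X_i) for deterministic f, and suppose the estimator q(·|x) satisfies D_KL(P[X_j|X_i=x] ∥ q(·|x)) ≤ ε for all x. Then the expected truthful high-effort score E[log q(X_j | X_i)] exceeds the expected score of any strategy σ depending only on X_i^l, namely E[log q(X_j | σ(X_i^l))], by at least I(X_i; X_j | X_i^l) − ε. -/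
open Finset

/-- Conditional Shannon entropy `H(B | A)` for a joint `P : A → B → ℝ`. -/
noncomputable def condEntropy {A B : Type*} [Fintype A] [Fintype B]
    (P : A → B → ℝ) : ℝ :=
  -∑ a, ∑ b, P a b * Real.log (P a b / ∑ b', P a b')

/-- Gibbs' inequality for unnormalized `p`. -/
lemma gibbs {B : Type*} [Fintype B] (p q : B → ℝ) (hp : ∀ b, 0 ≤ p b)
    (hq : ∀ b, 0 < q b) (hq1 : ∑ b, q b = 1) :
    ∑ b, p b * Real.log (q b) ≤ ∑ b, p b * Real.log (p b / ∑ b', p b') := by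
  set s := ∑ b', p b' with hs
  rcases (Finset.sum_nonneg fun b _ => hp b).eq_or_lt with h0 | h0
  · have hz : ∀ b ∈ Finset.univ, p b = 0 :=
      (Finset.sum_eq_zero_iff_of_nonneg fun b _ => hp b).mp h0.symm
    have e1 : ∑ b, p b * Real.log (q b) = 0 :=
      Finset.sum_eq_zero fun b hb => by rw [hz b hb]; ring
    have e2 : ∑ b, p b * Real.log (p b / s) = 0 :=
      Finset.sum_eq_zero fun b hb => by rw [hz b hb]; ring
    rw [e1, e2]
  · have key : ∀ b ∈ Finset.univ,
        p b * Real.log (q b) - p b * Real.log (p b / s) ≤ q b * s - p b := by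
      intro b _
      rcases (hp b).eq_or_lt with h | h
      · rw [← h]
        have hx : 0 < q b * s := mul_pos (hq b) h0
        have : (0:ℝ) * Real.log (q b) - 0 * Real.log (0 / s) = 0 := by ring
        rw [this]; linarith
      · have hne : p b ≠ 0 := ne_of_gt h
        have hqne : q b ≠ 0 := ne_of_gt (hq b)
        have hsne : s ≠ 0 := ne_of_gt h0
        have e : Real.log (q b) - Real.log (p b / s) = Real.log (q b * s / p b) := by
          rw [Real.log_div (mul_pos (hq b) h0).ne' hne, Real.log_mul hqne hsne,
            Real.log_div hne hsne]
          ring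
        have hpos : 0 < q b * s / p b := div_pos (mul_pos (hq b) h0) h
        have hlog : Real.log (q b * s / p b) ≤ q b * s / p b - 1 :=
          Real.log_le_sub_one_of_pos hpos
        calc p b * Real.log (q b) - p b * Real.log (p b / s)
            = p b * Real.log (q b * s / p b) := by rw [← e]; ring
          _ ≤ p b * (q b * s / p b - 1) := by
              exact mul_le_mul_of_nonneg_left hlog (hp b)
          _ = q b * s - p b := by field_simp
    have hsum := Finset.sum_le_sum key
    rw [Finset.sum_sub_distrib] at hsum
    have : ∑ b, (q b * s - p b) = 0 := by
      rw [Finset.sum_sub_distrib, ← Finset.sum_mul, hq1, ← hs]; ring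
    linarith [hsum, this.le, this.ge]

lemma term_split (p s qb : ℝ) (hp : 0 ≤ p) (hs : 0 < s) (hq : 0 < qb) :
    p * Real.log ((p / s) / qb) = p * Real.log (p / s) - p * Real.log qb := by
  rcases hp.eq_or_lt with h | h
  · simp [← h]
  · rw [Real.log_div (div_pos h hs).ne' (ne_of_gt hq)]; ring

/-- GPPM penalizes low effort: with `X_i^l = f(X_i)` deterministic and an
estimator `q(·|x)` within KL-divergence `ε` of `P[X_j|X_i=x]` for all `x`, the
expected truthful high-effort score exceeds the expected score of any
(randomized) strategy `σ` depending only on `X_i^l` by at least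
`I(X_i; X_j | X_i^l) − ε`, where
`I(X_i;X_j|X_i^l) = H(X_j|X_i^l) − H(X_j|X_i)`. -/
theorem gppm_penalizes_low_effort
    {A B C : Type*} [Fintype A] [Fintype B] [Fintype C] [DecidableEq C]
    (P : A → B → ℝ) (hP0 : ∀ a b, 0 ≤ P a b) (hP1 : ∑ a, ∑ b, P a b = 1)
    (f : A → C)
    (q : A → B → ℝ) (hqpos : ∀ a b, 0 < q a b) (hq1 : ∀ a, ∑ b, q a b = 1)
    (σ : C → A → ℝ) (hσ0 : ∀ c s, 0 ≤ σ c s) (hσ1 : ∀ c, ∑ s, σ c s = 1)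
    (ε : ℝ) (hε : 0 ≤ ε)
    (hKL : ∀ a, 0 < ∑ b', P a b' →
      ∑ b, (P a b / ∑ b', P a b') *
        Real.log ((P a b / ∑ b', P a b') / q a b) ≤ ε) :
    (∑ a, ∑ b, P a b * Real.log (q a b))
        - (∑ a, ∑ b, P a b * ∑ s, σ (f a) s * Real.log (q s b))
      ≥ (condEntropy (fun c b => ∑ a ∈ univ.filter (fun a => f a = c), P a b)
          - condEntropy P) - ε := by
  set Pc : C → B → ℝ := fun c b => ∑ a ∈ univ.filter (fun a => f a = c), P a b with hPc
  -- Step A : high effort score is at least -condEntropy P - ε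
  have stepA : -condEntropy P - ε ≤ ∑ a, ∑ b, P a b * Real.log (q a b) := by
    have h1 : ∀ a ∈ (Finset.univ : Finset A),
        (∑ b, P a b * Real.log (P a b / ∑ b', P a b')) - (∑ b', P a b') * ε
          ≤ ∑ b, P a b * Real.log (q a b) := by
      intro a _
      rcases (Finset.sum_nonneg fun b _ => hP0 a b).eq_or_lt with h0 | h0
      · have hz : ∀ b ∈ Finset.univ, P a b = 0 :=
          (Finset.sum_eq_zero_iff_of_nonneg fun b _ => hP0 a b).mp h0.symm
        have e1 : ∑ b, P a b * Real.log (P a b / ∑ b', P a b') = 0 :=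
          Finset.sum_eq_zero fun b hb => by rw [hz b hb]; ring
        have e2 : ∑ b, P a b * Real.log (q a b) = 0 :=
          Finset.sum_eq_zero fun b hb => by rw [hz b hb]; ring
        rw [e1, e2, ← h0]; simp
      · have hkl := hKL a h0
        have hm := mul_le_mul_of_nonneg_left hkl h0.le
        rw [Finset.mul_sum] at hm
        have hre : ∀ b ∈ Finset.univ,
            (∑ b', P a b') * ((P a b / ∑ b', P a b') *
              Real.log ((P a b / ∑ b', P a b') / q a b))
            = P a b * Real.log (P a b / ∑ b', P a b') - P a b * Real.log (q a b) := by
          intro b _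
          rw [← term_split (P a b) (∑ b', P a b') (q a b) (hP0 a b) h0 (hqpos a b)]
          field_simp
        rw [Finset.sum_congr rfl hre, Finset.sum_sub_distrib] at hm
        linarith
    have h2 := Finset.sum_le_sum h1
    rw [Finset.sum_sub_distrib, ← Finset.sum_mul] at h2
    have hssum : ∑ a, ∑ b', P a b' = 1 := hP1
    rw [hssum, one_mul] at h2
    simp only [condEntropy]
    linarith
  -- Step B : low effort score is at most -condEntropy Pc
  have stepB : (∑ a, ∑ b, P a b * ∑ s, σ (f a) s * Real.log (q s b))
      ≤ -condEntropy Pc := by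
    have swap1 : ∀ a, ∑ b, P a b * ∑ s, σ (f a) s * Real.log (q s b)
        = ∑ s, σ (f a) s * ∑ b, P a b * Real.log (q s b) := by
      intro a
      simp_rw [Finset.mul_sum]
      rw [Finset.sum_comm]
      exact Finset.sum_congr rfl fun s _ => Finset.sum_congr rfl fun b _ => by ring
    have fib : ∑ a, ∑ s, σ (f a) s * ∑ b, P a b * Real.log (q s b)
        = ∑ c, ∑ a ∈ univ.filter (fun a => f a = c),
            ∑ s, σ (f a) s * ∑ b, P a b * Real.log (q s b) := by
      exact (Finset.sum_fiberwise _ _ _).symm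
    have inner_eq : ∀ c, (∑ a ∈ univ.filter (fun a => f a = c),
          ∑ s, σ (f a) s * ∑ b, P a b * Real.log (q s b))
        = ∑ s, σ c s * ∑ b, Pc c b * Real.log (q s b) := by
      intro c
      rw [Finset.sum_comm]
      refine Finset.sum_congr rfl fun s _ => ?_
      have h1 : ∀ a ∈ univ.filter (fun a => f a = c),
          σ (f a) s * ∑ b, P a b * Real.log (q s b)
            = σ c s * ∑ b, P a b * Real.log (q s b) := by
        intro a ha
        rw [(Finset.mem_filter.mp ha).2]
      rw [Finset.sum_congr rfl h1, ← Finset.mul_sum]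
      congr 1
      rw [Finset.sum_comm]
      exact Finset.sum_congr rfl fun b _ => (Finset.sum_mul _ _ _).symm
    have bound : ∀ c ∈ (Finset.univ : Finset C),
        (∑ s, σ c s * ∑ b, Pc c b * Real.log (q s b))
          ≤ ∑ b, Pc c b * Real.log (Pc c b / ∑ b', Pc c b') := by
      intro c _
      have hPcnn : ∀ b, 0 ≤ Pc c b := fun b =>
        Finset.sum_nonneg fun a _ => hP0 a b
      have step : ∀ s ∈ (Finset.univ : Finset A),
          σ c s * ∑ b, Pc c b * Real.log (q s b)
            ≤ σ c s * ∑ b, Pc c b * Real.log (Pc c b / ∑ b', Pc c b') :=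
        fun s _ => mul_le_mul_of_nonneg_left
          (gibbs (Pc c) (q s) hPcnn (hqpos s) (hq1 s)) (hσ0 c s)
      calc ∑ s, σ c s * ∑ b, Pc c b * Real.log (q s b)
          ≤ ∑ s, σ c s * ∑ b, Pc c b * Real.log (Pc c b / ∑ b', Pc c b') :=
            Finset.sum_le_sum step
        _ = ∑ b, Pc c b * Real.log (Pc c b / ∑ b', Pc c b') := by
            rw [← Finset.sum_mul, hσ1, one_mul]
    calc ∑ a, ∑ b, P a b * ∑ s, σ (f a) s * Real.log (q s b)
        = ∑ c, ∑ s, σ c s * ∑ b, Pc c b * Real.log (q s b) := by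
          rw [Finset.sum_congr rfl fun a _ => swap1 a, fib]
          exact Finset.sum_congr rfl fun c _ => inner_eq c
      _ ≤ ∑ c, ∑ b, Pc c b * Real.log (Pc c b / ∑ b', Pc c b') :=
          Finset.sum_le_sum bound
      _ = -condEntropy Pc := by simp [condEntropy]
  have : condEntropy (fun c b => ∑ a ∈ univ.filter (fun a => f a = c), P a b)
      = condEntropy Pc := rfl
  rw [ge_iff_le, this]
  linarith
end

section
/- (GPPM penalizes untruthful high-effort reporting.) Suppose stochastic relevance holds: for any x ≠ x' there exists y with P[X_j=y|X_i=x] ≠ P[X_j=y|X_i=x']. If the estimator is exact, q(·|x) = P[X_j | X_i = x] for all x, then for any reporting strategy σ that differs from the identity on a set of positive probability, E[log q(X_j | X_i)] > E[log q(X_j | σ(X_i))]. -/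
open Finset

/-- Gibbs' inequality with strictness at a witness point. -/
lemma gibbs_strict {B : Type*} [Fintype B] (p r : B → ℝ)
    (hp : ∀ b, 0 < p b) (hr : ∀ b, 0 < r b)
    (hps : ∑ b, p b = 1) (hrs : ∑ b, r b = 1)
    (b0 : B) (hne : r b0 ≠ p b0) :
    ∑ b, p b * Real.log (r b) < ∑ b, p b * Real.log (p b) := by
  have key : ∀ b : B, p b * Real.log (r b) - p b * Real.log (p b) ≤ r b - p b := by
    intro b
    have h1 : p b * Real.log (r b) - p b * Real.log (p b)
        = p b * Real.log (r b / p b) := by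
      rw [Real.log_div (hr b).ne' (hp b).ne']; ring
    rw [h1]
    have h2 : Real.log (r b / p b) ≤ r b / p b - 1 :=
      Real.log_le_sub_one_of_pos (div_pos (hr b) (hp b))
    calc p b * Real.log (r b / p b) ≤ p b * (r b / p b - 1) := by
          exact mul_le_mul_of_nonneg_left h2 (hp b).le
      _ = r b - p b := by
          rw [mul_sub, mul_one, mul_div_cancel₀ _ (hp b).ne']
  have keystrict : p b0 * Real.log (r b0) - p b0 * Real.log (p b0) < r b0 - p b0 := by
    have h1 : p b0 * Real.log (r b0) - p b0 * Real.log (p b0)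
        = p b0 * Real.log (r b0 / p b0) := by
      rw [Real.log_div (hr b0).ne' (hp b0).ne']; ring
    rw [h1]
    have hx1 : r b0 / p b0 ≠ 1 := by
      intro h
      exact hne (div_eq_one_iff_eq (hp b0).ne' |>.mp h)
    have h2 : Real.log (r b0 / p b0) < r b0 / p b0 - 1 :=
      Real.log_lt_sub_one_of_pos (div_pos (hr b0) (hp b0)) hx1
    calc p b0 * Real.log (r b0 / p b0) < p b0 * (r b0 / p b0 - 1) := by
          exact mul_lt_mul_of_pos_left h2 (hp b0)
      _ = r b0 - p b0 := by
          rw [mul_sub, mul_one, mul_div_cancel₀ _ (hp b0).ne']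
  have hsum : ∑ b, (p b * Real.log (r b) - p b * Real.log (p b))
      < ∑ b, (r b - p b) :=
    Finset.sum_lt_sum (fun b _ => key b) ⟨b0, mem_univ b0, keystrict⟩
  have h0 : ∑ b, (r b - p b) = 0 := by
    rw [Finset.sum_sub_distrib, hps, hrs]; ring
  rw [Finset.sum_sub_distrib, h0] at hsum
  linarith

/-- GPPM penalizes untruthful high-effort reporting: under stochastic relevance
and an exact estimator `q(·|x) = P[X_j | X_i = x]`, any deterministic reporting
strategy `σ` that differs from the identity with positive probability obtains a
strictly smaller expected score than truthful reporting. -/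
theorem gppm_penalizes_untruthful
    {A B : Type*} [Fintype A] [Fintype B] [DecidableEq A]
    (P : A → B → ℝ) (hPpos : ∀ a b, 0 < P a b) (hP1 : ∑ a, ∑ b, P a b = 1)
    (hrel : ∀ a a' : A, a ≠ a' → ∃ b,
      P a b / ∑ b', P a b' ≠ P a' b / ∑ b', P a' b')
    (q : A → B → ℝ) (hq : ∀ a b, q a b = P a b / ∑ b', P a b')
    (σ : A → A)
    (hσ : 0 < ∑ a ∈ univ.filter (fun a => σ a ≠ a), ∑ b, P a b) :
    (∑ a, ∑ b, P a b * Real.log (q a b))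
      > ∑ a, ∑ b, P a b * Real.log (q (σ a) b) := by
  classical
  have hB : Nonempty B := by
    by_contra h
    rw [not_nonempty_iff] at h
    simp [Finset.univ_eq_empty] at hσ
  set S : A → ℝ := fun a => ∑ b', P a b' with hS
  have hSpos : ∀ a, 0 < S a := fun a =>
    Finset.sum_pos (fun b _ => hPpos a b) univ_nonempty
  have hqpos : ∀ a b, 0 < q a b := by
    intro a b; rw [hq]; exact div_pos (hPpos a b) (hSpos a)
  have hq1 : ∀ a, ∑ b, q a b = 1 := by
    intro a
    simp only [hq]
    rw [← Finset.sum_div]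
    exact div_self (hSpos a).ne'
  have hPq : ∀ a b, P a b = S a * q a b := by
    intro a b; rw [hq, mul_comm, div_mul_cancel₀ _ (hSpos a).ne']
  -- row-wise comparison
  have hrow_le : ∀ a : A,
      ∑ b, P a b * Real.log (q (σ a) b) ≤ ∑ b, P a b * Real.log (q a b) := by
    intro a
    by_cases h : σ a = a
    · rw [h]
    · have ⟨b0, hb0⟩ := hrel a (σ a) (fun he => h he.symm)
      have hb0' : q (σ a) b0 ≠ q a b0 := by
        rw [hq, hq]; exact fun he => hb0 he.symm
      have hg := gibbs_strict (q a) (q (σ a)) (hqpos a) (hqpos (σ a))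
        (hq1 a) (hq1 (σ a)) b0 hb0'
      have := mul_le_mul_of_nonneg_left hg.le (hSpos a).le
      simp only [hPq a, mul_assoc, ← Finset.mul_sum] at *
      exact this
  have hrow_lt : ∀ a : A, σ a ≠ a →
      ∑ b, P a b * Real.log (q (σ a) b) < ∑ b, P a b * Real.log (q a b) := by
    intro a h
    have ⟨b0, hb0⟩ := hrel a (σ a) (fun he => h he.symm)
    have hb0' : q (σ a) b0 ≠ q a b0 := by
      rw [hq, hq]; exact fun he => hb0 he.symm
    have hg := gibbs_strict (q a) (q (σ a)) (hqpos a) (hqpos (σ a))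
      (hq1 a) (hq1 (σ a)) b0 hb0'
    have := mul_lt_mul_of_pos_left hg (hSpos a)
    simp only [hPq a, mul_assoc, ← Finset.mul_sum] at *
    exact this
  -- there is some a with σ a ≠ a
  obtain ⟨a0, ha0⟩ : ∃ a : A, σ a ≠ a := by
    by_contra hc
    push_neg at hc
    have : (univ.filter (fun a => σ a ≠ a)) = ∅ := by
      ext a; simp [hc a]
    rw [this] at hσ
    simp at hσ
  exact Finset.sum_lt_sum (fun a _ => hrow_le a)
    ⟨a0, mem_univ a0, hrow_lt a0 ha0⟩
end

section
/- (GSPPM no-effort gap.) Under the same KL bound with parameter ε' on the conditional estimator q(·|x,θ), the expected truthful high-effort score E[log q(X_j | X_i, Θ)] exceeds the expected score of any report σ independent of (X_i, X_j) given Θ, namely E[log q(X_j | σ, Θ)], by at least I(X_i; X_j | Θ) − ε'. -/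
open Finset

/-- Swap the outer and inner sums in a triple sum. -/
lemma sum_swap3 {α β γ : Type*} [Fintype α] [Fintype β] [Fintype γ]
    (f : α → β → γ → ℝ) :
    ∑ a, ∑ b, ∑ c, f a b c = ∑ c, ∑ b, ∑ a, f a b c := by
  calc ∑ a, ∑ b, ∑ c, f a b c
      = ∑ b, ∑ a, ∑ c, f a b c := Finset.sum_comm
    _ = ∑ b, ∑ c, ∑ a, f a b c :=
        Finset.sum_congr rfl fun b _ => Finset.sum_comm
    _ = ∑ c, ∑ b, ∑ a, f a b c := Finset.sum_comm

/-- Gibbs' inequality, unnormalized form. -/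
lemma gibbs_aux {B : Type*} [Fintype B] (M : B → ℝ) (hM : ∀ b, 0 ≤ M b)
    (qq : B → ℝ) (hq : ∀ b, 0 < qq b) (hq1 : ∑ b, qq b = 1) :
    ∑ b, M b * Real.log (qq b) ≤ ∑ b, M b * Real.log (M b / ∑ b', M b') := by
  set S := ∑ b', M b' with hS
  have hS0 : 0 ≤ S := Finset.sum_nonneg fun b _ => hM b
  rcases eq_or_lt_of_le hS0 with h0 | hpos
  · have hz : ∀ b ∈ Finset.univ, M b = 0 :=
      (Finset.sum_eq_zero_iff_of_nonneg (fun b _ => hM b)).1 h0.symm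
    have e1 : ∀ b ∈ (Finset.univ : Finset B), M b * Real.log (qq b) = 0 := by
      intro b hb; rw [hz b hb]; ring
    have e2 : ∀ b ∈ (Finset.univ : Finset B), M b * Real.log (M b / S) = 0 := by
      intro b hb; rw [hz b hb]; ring
    rw [Finset.sum_congr rfl e1, Finset.sum_congr rfl e2]
  · have key : ∀ b, M b * Real.log (qq b) - M b * Real.log (M b / S) ≤ qq b * S - M b := by
      intro b
      rcases eq_or_lt_of_le (hM b) with hb | hb
      · rw [← hb]
        have : (0:ℝ) ≤ qq b * S := le_of_lt (mul_pos (hq b) hpos)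
        simpa using this
      · have hne : M b ≠ 0 := ne_of_gt hb
        have h1 : Real.log (qq b) - Real.log (M b / S) = Real.log (qq b * S / M b) := by
          rw [Real.log_div (ne_of_gt (mul_pos (hq b) hpos)) hne,
            Real.log_div hne (ne_of_gt hpos),
            Real.log_mul (ne_of_gt (hq b)) (ne_of_gt hpos)]
          ring
        have h2 : Real.log (qq b * S / M b) ≤ qq b * S / M b - 1 :=
          Real.log_le_sub_one_of_pos (div_pos (mul_pos (hq b) hpos) hb)
        calc M b * Real.log (qq b) - M b * Real.log (M b / S)
            = M b * Real.log (qq b * S / M b) := by rw [← h1]; ring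
          _ ≤ M b * (qq b * S / M b - 1) := mul_le_mul_of_nonneg_left h2 (hM b)
          _ = qq b * S - M b := by field_simp
    have hsum : ∑ b, (M b * Real.log (qq b) - M b * Real.log (M b / S)) ≤
        ∑ b, (qq b * S - M b) := Finset.sum_le_sum fun b _ => key b
    have hrhs : ∑ b, (qq b * S - M b) = 0 := by
      rw [Finset.sum_sub_distrib, ← Finset.sum_mul, hq1, ← hS]; ring
    rw [Finset.sum_sub_distrib, hrhs] at hsum
    linarith

/-- KL-side lower bound, unnormalized. -/
lemma kl_aux {B : Type*} [Fintype B] (p : B → ℝ) (hp : ∀ b, 0 ≤ p b)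
    (qq : B → ℝ) (hq : ∀ b, 0 < qq b) (ε' : ℝ)
    (hKL : 0 < ∑ b', p b' →
      ∑ b, (p b / ∑ b', p b') * Real.log ((p b / ∑ b', p b') / qq b) ≤ ε') :
    ∑ b, p b * Real.log (p b / ∑ b', p b') - ε' * (∑ b', p b')
      ≤ ∑ b, p b * Real.log (qq b) := by
  set S := ∑ b', p b' with hS
  have hS0 : 0 ≤ S := Finset.sum_nonneg fun b _ => hp b
  rcases eq_or_lt_of_le hS0 with h0 | hpos
  · have hz : ∀ b ∈ Finset.univ, p b = 0 :=
      (Finset.sum_eq_zero_iff_of_nonneg (fun b _ => hp b)).1 h0.symm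
    have e1 : ∀ b ∈ (Finset.univ : Finset B), p b * Real.log (p b / S) = 0 := by
      intro b hb; rw [hz b hb]; ring
    have e2 : ∀ b ∈ (Finset.univ : Finset B), p b * Real.log (qq b) = 0 := by
      intro b hb; rw [hz b hb]; ring
    rw [Finset.sum_congr rfl e1, Finset.sum_congr rfl e2, ← h0]
    simp
  · have h1 := hKL hpos
    have h2 : ∑ b, p b * Real.log ((p b / S) / qq b) ≤ ε' * S := by
      have := mul_le_mul_of_nonneg_left h1 (le_of_lt hpos)
      rw [Finset.mul_sum] at this
      calc ∑ b, p b * Real.log ((p b / S) / qq b)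
          = ∑ b, S * ((p b / S) * Real.log ((p b / S) / qq b)) := by
            apply Finset.sum_congr rfl; intro b _
            field_simp
        _ ≤ S * ε' := this
        _ = ε' * S := by ring
    have h3 : ∀ b, p b * Real.log ((p b / S) / qq b)
        = p b * Real.log (p b / S) - p b * Real.log (qq b) := by
      intro b
      rcases eq_or_lt_of_le (hp b) with hb | hb
      · rw [← hb]; simp
      · rw [Real.log_div (ne_of_gt (div_pos hb hpos)) (ne_of_gt (hq b))]; ring
    rw [Finset.sum_congr rfl (fun b _ => h3 b), Finset.sum_sub_distrib] at h2
    linarith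

/-- GSPPM no-effort gap: with a synopsis-conditional estimator `q(·|x,θ)` within
KL-divergence `ε'` of `P[X_j | X_i = x, Θ = θ]` for all `(x,θ)`, the expected
truthful high-effort score `E[log q(X_j|X_i,Θ)]` exceeds the expected score of
any random report `σ` that is conditionally independent of `(X_i, X_j)` given
`Θ` (distribution `ρ θ` over reports) by at least `I(X_i; X_j | Θ) − ε'`, where
`I(X_i;X_j|Θ) = H(X_j|Θ) − H(X_j|Θ,X_i)`. -/
theorem gsppm_no_effort_gap
    {T A B : Type*} [Fintype T] [Fintype A] [Fintype B]
    (P : T → A → B → ℝ) (hP0 : ∀ t a b, 0 ≤ P t a b)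
    (hP1 : ∑ t, ∑ a, ∑ b, P t a b = 1)
    (q : A → T → B → ℝ) (hqpos : ∀ a t b, 0 < q a t b)
    (hq1 : ∀ a t, ∑ b, q a t b = 1)
    (ρ : T → A → ℝ) (hρ0 : ∀ t s, 0 ≤ ρ t s) (hρ1 : ∀ t, ∑ s, ρ t s = 1)
    (ε' : ℝ) (hε' : 0 ≤ ε')
    (hKL : ∀ a t, 0 < ∑ b', P t a b' →
      ∑ b, (P t a b / ∑ b', P t a b') *
        Real.log ((P t a b / ∑ b', P t a b') / q a t b) ≤ ε') :
    (∑ t, ∑ a, ∑ b, P t a b * Real.log (q a t b))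
        - (∑ t, ∑ a, ∑ b, P t a b * ∑ s, ρ t s * Real.log (q s t b))
      ≥ ((-∑ t, ∑ b, (∑ a, P t a b) *
            Real.log ((∑ a, P t a b) / ∑ a, ∑ b', P t a b'))
          - (-∑ t, ∑ a, ∑ b, P t a b *
              Real.log (P t a b / ∑ b', P t a b'))) - ε' := by
  -- Truthful side: per (t,a) KL bound
  have truthful : ∀ t a,
      ∑ b, P t a b * Real.log (P t a b / ∑ b', P t a b')
        - ε' * (∑ b', P t a b')
      ≤ ∑ b, P t a b * Real.log (q a t b) :=
    fun t a => kl_aux (P t a) (hP0 t a) (q a t) (hqpos a t) ε' (hKL a t)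
  have trsum : (∑ t, ∑ a, ∑ b, P t a b * Real.log (P t a b / ∑ b', P t a b')) - ε'
      ≤ ∑ t, ∑ a, ∑ b, P t a b * Real.log (q a t b) := by
    have h := Finset.sum_le_sum (fun t (_ : t ∈ Finset.univ) =>
      Finset.sum_le_sum (fun a (_ : a ∈ Finset.univ) => truthful t a))
    have e : ∑ t, ∑ a, (∑ b, P t a b * Real.log (P t a b / ∑ b', P t a b')
        - ε' * (∑ b', P t a b'))
        = (∑ t, ∑ a, ∑ b, P t a b * Real.log (P t a b / ∑ b', P t a b')) - ε' := by
      simp_rw [Finset.sum_sub_distrib, ← Finset.mul_sum]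
      rw [hP1, mul_one]
    rw [← e]; exact h
  -- Sigma side
  have sigma_bound : ∀ t,
      ∑ a, ∑ b, P t a b * ∑ s, ρ t s * Real.log (q s t b)
      ≤ ∑ b, (∑ a, P t a b) * Real.log ((∑ a, P t a b) / ∑ a, ∑ b', P t a b') := by
    intro t
    have hM0 : ∀ b, 0 ≤ ∑ a, P t a b :=
      fun b => Finset.sum_nonneg fun a _ => hP0 t a b
    have hg : ∀ s, ∑ b, (∑ a, P t a b) * Real.log (q s t b)
        ≤ ∑ b, (∑ a, P t a b) * Real.log ((∑ a, P t a b) / ∑ b', ∑ a, P t a b') :=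
      fun s => gibbs_aux _ hM0 (q s t) (hqpos s t) (hq1 s t)
    have hden : (∑ b', ∑ a, P t a b') = ∑ a, ∑ b', P t a b' := Finset.sum_comm
    calc ∑ a, ∑ b, P t a b * ∑ s, ρ t s * Real.log (q s t b)
        = ∑ s, ∑ b, ∑ a, P t a b * (ρ t s * Real.log (q s t b)) := by
          simp_rw [Finset.mul_sum]; exact sum_swap3 _
      _ = ∑ s, ρ t s * ∑ b, (∑ a, P t a b) * Real.log (q s t b) := by
          apply Finset.sum_congr rfl; intro s _
          rw [Finset.mul_sum]
          apply Finset.sum_congr rfl; intro b _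
          rw [Finset.sum_mul, Finset.mul_sum]
          apply Finset.sum_congr rfl; intro a _
          ring
      _ ≤ ∑ s, ρ t s * ∑ b, (∑ a, P t a b) *
            Real.log ((∑ a, P t a b) / ∑ b', ∑ a, P t a b') := by
          apply Finset.sum_le_sum; intro s _
          exact mul_le_mul_of_nonneg_left (hg s) (hρ0 t s)
      _ = ∑ b, (∑ a, P t a b) *
            Real.log ((∑ a, P t a b) / ∑ b', ∑ a, P t a b') := by
          rw [← Finset.sum_mul, hρ1, one_mul]
      _ = ∑ b, (∑ a, P t a b) *
            Real.log ((∑ a, P t a b) / ∑ a, ∑ b', P t a b') := by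
          rw [hden]
  have sgsum : ∑ t, ∑ a, ∑ b, P t a b * ∑ s, ρ t s * Real.log (q s t b)
      ≤ ∑ t, ∑ b, (∑ a, P t a b) * Real.log ((∑ a, P t a b) / ∑ a, ∑ b', P t a b') :=
    Finset.sum_le_sum fun t _ => sigma_bound t
  linarith
end

section
/- (Potency of GPPM, Proposition 4.) Suppose the score gaps hold: truthful high-effort beats untruthful high-effort by at least −ε in expected score, beats any low-effort strategy by at least I(X_i;X_j|X_i^l) − ε, and beats any no-effort strategy by at least I(X_i;X_j) − ε. Let c_h > c_l ≥ 0 be the costs of high and low effort, and assume I(X_i;X_j|X_i^l) > 0. Then setting α = max((c_h−c_l)/I(X_i;X_j|X_i^l), c_h/I(X_i;X_j)), the strategy (truthful, high-effort) is an (α·ε)-best response under payments p = α·s + β: no deviation gains more than α·ε in expected utility. -/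
/-- Potency of GPPM: given the three expected-score gap guarantees (against
untruthful high-effort, low-effort, and no-effort deviations), effort costs
`c_h > c_l ≥ 0`, and `I(X_i;X_j) ≥ I(X_i;X_j|X_i^l) > 0`, setting
`α = max((c_h−c_l)/I(X_i;X_j|X_i^l), c_h/I(X_i;X_j))` makes (truthful, high
effort) an `α·ε`-best response under payments `p = α·s + β`: no deviation gains
more than `α·ε` in expected utility. -/
theorem gppm_potent
    (Sh Su Sl Sn Icond I ε ch cl β : ℝ)
    (h1 : Sh - Su ≥ -ε)
    (h2 : Sh - Sl ≥ Icond - ε)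
    (h3 : Sh - Sn ≥ I - ε)
    (hc : ch > cl) (hcl : 0 ≤ cl)
    (hII : Icond ≤ I) (hIpos : 0 < Icond) (hε : 0 ≤ ε) :
    let α := max ((ch - cl) / Icond) (ch / I)
    ((α * Sh + β - ch) ≥ (α * Su + β - ch) - α * ε) ∧
    ((α * Sh + β - ch) ≥ (α * Sl + β - cl) - α * ε) ∧
    ((α * Sh + β - ch) ≥ (α * Sn + β - 0) - α * ε) := by
  intro α
  have hIpos' : 0 < I := lt_of_lt_of_le hIpos hII
  have hα1 : (ch - cl) / Icond ≤ α := le_max_left _ _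
  have hα2 : ch / I ≤ α := le_max_right _ _
  have hα0 : 0 ≤ α := le_trans (div_nonneg (by linarith) hIpos.le) hα1
  have hA : ch - cl ≤ α * Icond := by
    rw [div_le_iff₀ hIpos] at hα1; linarith
  have hB : ch ≤ α * I := by
    rw [div_le_iff₀ hIpos'] at hα2; linarith
  refine ⟨?_, ?_, ?_⟩
  · nlinarith
  · nlinarith
  · nlinarith
end
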